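/- arXiv:2503.14084 — 2 statements merged into one kernel-verified Lean document; each statement's English description precedes it below -/
import Mathlib

section
/- Let F : ℝᵈ¹ × ℝᵈ² → ℝ be differentiable such that: ∇_u F is L_u-Lipschitz in u, L_{uv}-Lipschitz in v; ∇_v F is L_v-Lipschitz in v. Then for all u, u', v, v': F(u', v') - F(u, v) ≤ ⟨∇_u F(u, v), u' - u⟩ + ((L_u + L_{uv})/2)‖u' - u‖² + ⟨∇_v F(u, v), v' - v⟩ + ((L_v + L_{uv})/2)‖v' - v‖². -/
open InnerProductSpace intervalIntegral

lemma descent_aux {E : Type*} [NormedAddCommGroup E] [InnerProductSpace ℝ E] [CompleteSpace E]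
    (f : E → ℝ) (L : ℝ) (hL : 0 ≤ L) (hdiff : Differentiable ℝ f)
    (hlip : ∀ x y, ‖gradient f x - gradient f y‖ ≤ L * ‖x - y‖) (x y : E) :
    f y - f x ≤ inner ℝ (gradient f x) (y - x) + L / 2 * ‖y - x‖ ^ 2 := by
  set d := y - x with hd
  have hcurve : ∀ t : ℝ, HasDerivAt (fun t : ℝ => x + t • d) d t := by
    intro t
    simpa using ((hasDerivAt_id t).smul_const d).const_add x
  have hg : ∀ t : ℝ, HasDerivAt (fun t => f (x + t • d))
      (inner ℝ (gradient f (x + t • d)) d : ℝ) t := by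
    intro t
    have h2 := (hdiff (x + t • d)).hasGradientAt.hasFDerivAt
    have := h2.comp_hasDerivAt t (hcurve t)
    simpa [InnerProductSpace.toDual_apply_apply, Function.comp_def] using this
  have hgradcont : Continuous (gradient f) := by
    rcases le_or_gt L 0 with h | h
    · have : ∀ a b, gradient f a = gradient f b := by
        intro a b
        have := hlip a b
        have h2 : ‖gradient f a - gradient f b‖ ≤ 0 :=
          this.trans (mul_nonpos_of_nonpos_of_nonneg h (norm_nonneg _))
        rw [sub_eq_zero.mp (norm_le_zero_iff.mp h2)]
      have : gradient f = fun _ => gradient f x := funext fun a => this a x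
      rw [this]; exact continuous_const
    · exact (LipschitzWith.of_dist_le_mul (K := ⟨L, hL⟩) (by
        intro a b; rw [dist_eq_norm, dist_eq_norm]; exact hlip a b)).continuous
  have hcont : Continuous fun t : ℝ => (inner ℝ (gradient f (x + t • d)) d : ℝ) := by
    exact (hgradcont.comp (by continuity)).inner continuous_const
  have hint : f y - f x = ∫ t in (0:ℝ)..1, (inner ℝ (gradient f (x + t • d)) d : ℝ) := by
    have := intervalIntegral.integral_eq_sub_of_hasDerivAt
      (f := fun t => f (x + t • d)) (fun t _ => hg t)
      (hcont.intervalIntegrable 0 1)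
    rw [this]; simp [hd]
  have hbound : ∀ t ∈ Set.Icc (0:ℝ) 1,
      (inner ℝ (gradient f (x + t • d)) d : ℝ) ≤ inner ℝ (gradient f x) d + L * t * ‖d‖ ^ 2 := by
    intro t ht
    have h1 : (inner ℝ (gradient f (x + t • d)) d : ℝ) - inner ℝ (gradient f x) d
        = inner ℝ (gradient f (x + t • d) - gradient f x) d := by
      rw [inner_sub_left]
    have h2 : (inner ℝ (gradient f (x + t • d) - gradient f x) d : ℝ)
        ≤ ‖gradient f (x + t • d) - gradient f x‖ * ‖d‖ := real_inner_le_norm _ _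
    have h3 : ‖gradient f (x + t • d) - gradient f x‖ ≤ L * (t * ‖d‖) := by
      have := hlip (x + t • d) x
      simpa [norm_smul, abs_of_nonneg ht.1] using this
    nlinarith [norm_nonneg d]
  have hintle : (∫ t in (0:ℝ)..1, (inner ℝ (gradient f (x + t • d)) d : ℝ))
      ≤ ∫ t in (0:ℝ)..1, (inner ℝ (gradient f x) d + L * t * ‖d‖ ^ 2 : ℝ) := by
    apply intervalIntegral.integral_mono_on (by norm_num)
      (hcont.intervalIntegrable 0 1)
      (by apply Continuous.intervalIntegrable; continuity)
    intro t ht; exact hbound t ht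
  have hval : (∫ t in (0:ℝ)..1, (inner ℝ (gradient f x) d + L * t * ‖d‖ ^ 2 : ℝ))
      = inner ℝ (gradient f x) d + L / 2 * ‖d‖ ^ 2 := by
    rw [intervalIntegral.integral_add (by apply Continuous.intervalIntegrable; continuity)
      (by apply Continuous.intervalIntegrable; continuity)]
    have h1 : (∫ t in (0:ℝ)..1, (L * t * ‖d‖ ^ 2 : ℝ)) = L / 2 * ‖d‖ ^ 2 := by
      simp_rw [show ∀ t : ℝ, L * t * ‖d‖ ^ 2 = (L * ‖d‖ ^ 2) * t from fun t => by ring]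
      rw [intervalIntegral.integral_const_mul, integral_id]; ring
    rw [h1]; simp
  rw [hint]
  calc _ ≤ _ := hintle
    _ = _ := hval

theorem two_block_descent_lemma {d₁ d₂ : ℕ}
    (F : EuclideanSpace ℝ (Fin d₁) → EuclideanSpace ℝ (Fin d₂) → ℝ)
    (Lu Lv Luv : ℝ) (hLu : 0 < Lu) (hLv : 0 < Lv) (hLuv : 0 < Luv)
    (hdiffu : ∀ v, Differentiable ℝ (fun u => F u v))
    (hdiffv : ∀ u, Differentiable ℝ (fun v => F u v))
    (hu_lip : ∀ v u u', ‖gradient (fun u => F u v) u - gradient (fun u => F u v) u'‖ ≤ Lu * ‖u - u'‖)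
    (hv_lip : ∀ u v v', ‖gradient (fun v => F u v) v - gradient (fun v => F u v) v'‖ ≤ Lv * ‖v - v'‖)
    (huv_lip : ∀ u v v', ‖gradient (fun u' => F u' v) u - gradient (fun u' => F u' v') u‖ ≤ Luv * ‖v - v'‖)
    (u u' : EuclideanSpace ℝ (Fin d₁)) (v v' : EuclideanSpace ℝ (Fin d₂)) :
    F u' v' - F u v ≤
      inner ℝ (gradient (fun w => F w v) u) (u' - u) + ((Lu + Luv) / 2) * ‖u' - u‖ ^ 2
      + inner ℝ (gradient (fun w => F u w) v) (v' - v) + ((Lv + Luv) / 2) * ‖v' - v‖ ^ 2 := by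
  have h1 : F u' v' - F u v' ≤
      inner ℝ (gradient (fun w => F w v') u) (u' - u) + Lu / 2 * ‖u' - u‖ ^ 2 :=
    descent_aux (fun w => F w v') Lu hLu.le (hdiffu v') (hu_lip v') u u'
  have h2 : F u v' - F u v ≤
      inner ℝ (gradient (fun w => F u w) v) (v' - v) + Lv / 2 * ‖v' - v‖ ^ 2 :=
    descent_aux (fun w => F u w) Lv hLv.le (hdiffv u) (hv_lip u) v v'
  have h3 : (inner ℝ (gradient (fun w => F w v') u) (u' - u) : ℝ) ≤
      inner ℝ (gradient (fun w => F w v) u) (u' - u)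
        + Luv / 2 * ‖u' - u‖ ^ 2 + Luv / 2 * ‖v' - v‖ ^ 2 := by
    have hd : (inner ℝ (gradient (fun w => F w v') u) (u' - u) : ℝ)
        - inner ℝ (gradient (fun w => F w v) u) (u' - u)
        = inner ℝ (gradient (fun w => F w v') u - gradient (fun w => F w v) u) (u' - u) := by
      rw [inner_sub_left]
    have hcs : (inner ℝ (gradient (fun w => F w v') u - gradient (fun w => F w v) u) (u' - u) : ℝ)
        ≤ ‖gradient (fun w => F w v') u - gradient (fun w => F w v) u‖ * ‖u' - u‖ :=
      real_inner_le_norm _ _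
    have hl := huv_lip u v' v
    nlinarith [norm_nonneg (u' - u), norm_nonneg (v' - v),
      sq_nonneg (‖u' - u‖ - ‖v' - v‖),
      mul_le_mul_of_nonneg_right hl (norm_nonneg (u' - u))]
  linarith
end

section
/- Suppose L_u, L_v, L_{uv}, L_{vu} > 0, τ ≥ 1, and η_u ≤ 1/(√6 · τ · L_u · max{1, (L_{vu}L_{uv})/(L_u L_v)}), η_v ≤ 1/(√6 · τ · L_v · max{1, (L_{vu}L_{uv})/(L_u L_v)}). Define A = L_u² η_u + L_{vu}² η_v and B = L_v² η_v + L_{uv}² η_u. Then 3τ²η_u²L_u²A + 3τ²η_v²L_{vu}²B ≤ A. -/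
/-!
The step-size bounds give `6 (τ L_u M η_u)² ≤ 1` and `6 (τ L_v M η_v)² ≤ 1`, where
`M = max 1 (L_vu L_uv / (L_u L_v)) ≥ 1`. Each of the four products on the left is then at most
half of a summand of `A`: three of them directly, and the cross term
`3 τ² η_v² L_vu² L_uv² η_u` after trading `L_vu L_uv` for `M L_u L_v`.
-/

lemma le_max_one_div_mul {a b : ℝ} (hb : 0 < b) : a ≤ max 1 (a / b) * b :=
  (div_le_iff₀ hb).1 (le_max_right _ _)

lemma six_mul_sq_le_one_of_le_one_div_sqrt_six {c η : ℝ} (hc : 0 < c) (hη : 0 ≤ η)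
    (h : η ≤ 1 / (√6 * c)) : 6 * (c * η) ^ 2 ≤ 1 := by
  have hcη : c * η ≤ 1 / √6 := by
    rw [le_div_iff₀ (by positivity)] at h ⊢
    linarith
  have hsq := pow_le_pow_left₀ (by positivity) hcη 2
  rw [div_pow, Real.sq_sqrt (by norm_num)] at hsq
  linarith

lemma drift_bound_of_sq_step_bounds {Lu Lv Luv Lvu τ ηu ηv M : ℝ}
    (hM : 1 ≤ M) (hcross : (Lvu * Luv) ^ 2 ≤ (M * (Lu * Lv)) ^ 2)
    (hηu : 0 ≤ ηu) (hηv : 0 ≤ ηv)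
    (hu : 6 * (τ * Lu * M * ηu) ^ 2 ≤ 1) (hv : 6 * (τ * Lv * M * ηv) ^ 2 ≤ 1) :
    3 * τ ^ 2 * ηu ^ 2 * Lu ^ 2 * (Lu ^ 2 * ηu + Lvu ^ 2 * ηv)
      + 3 * τ ^ 2 * ηv ^ 2 * Lvu ^ 2 * (Lv ^ 2 * ηv + Luv ^ 2 * ηu)
      ≤ Lu ^ 2 * ηu + Lvu ^ 2 * ηv := by
  have hM2 : 1 ≤ M ^ 2 := one_le_pow₀ hM
  have hu1 : 6 * (τ * Lu * ηu) ^ 2 ≤ 1 := by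
    nlinarith [mul_le_mul_of_nonneg_right hM2 (sq_nonneg (τ * Lu * ηu))]
  have hv1 : 6 * (τ * Lv * ηv) ^ 2 ≤ 1 := by
    nlinarith [mul_le_mul_of_nonneg_right hM2 (sq_nonneg (τ * Lv * ηv))]
  have hA : 3 * τ ^ 2 * ηu ^ 2 * Lu ^ 2 * (Lu ^ 2 * ηu + Lvu ^ 2 * ηv)
      ≤ (Lu ^ 2 * ηu + Lvu ^ 2 * ηv) / 2 :=
    calc _ = 6 * (τ * Lu * ηu) ^ 2 * ((Lu ^ 2 * ηu + Lvu ^ 2 * ηv) / 2) := by ring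
      _ ≤ 1 * ((Lu ^ 2 * ηu + Lvu ^ 2 * ηv) / 2) := by gcongr
      _ = _ := one_mul _
  have hvv : 3 * τ ^ 2 * ηv ^ 2 * Lvu ^ 2 * (Lv ^ 2 * ηv) ≤ Lvu ^ 2 * ηv / 2 :=
    calc _ = 6 * (τ * Lv * ηv) ^ 2 * (Lvu ^ 2 * ηv / 2) := by ring
      _ ≤ 1 * (Lvu ^ 2 * ηv / 2) := by gcongr
      _ = _ := one_mul _
  have hvu : 3 * τ ^ 2 * ηv ^ 2 * Lvu ^ 2 * (Luv ^ 2 * ηu) ≤ Lu ^ 2 * ηu / 2 :=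
    calc _ = (Lvu * Luv) ^ 2 * (3 * τ ^ 2 * ηv ^ 2 * ηu) := by ring
      _ ≤ (M * (Lu * Lv)) ^ 2 * (3 * τ ^ 2 * ηv ^ 2 * ηu) := by gcongr
      _ = 6 * (τ * Lv * M * ηv) ^ 2 * (Lu ^ 2 * ηu / 2) := by ring
      _ ≤ 1 * (Lu ^ 2 * ηu / 2) := by gcongr
      _ = _ := one_mul _
  linarith

theorem lemma7_first (Lu Lv Luv Lvu τ ηu ηv : ℝ)
    (hLu : 0 < Lu) (hLv : 0 < Lv) (hLuv : 0 < Luv) (hLvu : 0 < Lvu)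
    (hτ : 1 ≤ τ) (hηu : 0 < ηu) (hηv : 0 < ηv)
    (hu : ηu ≤ 1 / (Real.sqrt 6 * τ * Lu * max 1 (Lvu * Luv / (Lu * Lv))))
    (hv : ηv ≤ 1 / (Real.sqrt 6 * τ * Lv * max 1 (Lvu * Luv / (Lu * Lv)))) :
    3 * τ ^ 2 * ηu ^ 2 * Lu ^ 2 * (Lu ^ 2 * ηu + Lvu ^ 2 * ηv)
      + 3 * τ ^ 2 * ηv ^ 2 * Lvu ^ 2 * (Lv ^ 2 * ηv + Luv ^ 2 * ηu)
      ≤ Lu ^ 2 * ηu + Lvu ^ 2 * ηv := by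
  set M := max 1 (Lvu * Luv / (Lu * Lv))
  have hM : 1 ≤ M := le_max_left _ _
  have hτ0 : 0 < τ := zero_lt_one.trans_le hτ
  have hcross : Lvu * Luv ≤ M * (Lu * Lv) := le_max_one_div_mul (by positivity)
  refine drift_bound_of_sq_step_bounds hM (pow_le_pow_left₀ (by positivity) hcross 2)
    hηu.le hηv.le ?_ ?_
  · exact six_mul_sq_le_one_of_le_one_div_sqrt_six (by positivity) hηu.le
      (by simpa only [mul_assoc] using hu)
  · exact six_mul_sq_le_one_of_le_one_div_sqrt_six (by positivity) hηv.le
      (by simpa only [mul_assoc] using hv)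
end
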